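/- For integers n ≥ 2, b ≥ 2 and 1 ≤ r < b with n ≥ b - r - 1, the chromatic number of the circulant graph G_{nb+r,b} equals n + 1. -/
import Mathlib


open SimpleGraph Set

/-- A graph is an interval graph if it is the intersection graph of a family of
closed intervals on the real line. -/
def IsIntervalGraph {V : Type*} (G : SimpleGraph V) : Prop :=
  ∃ lo hi : V → ℝ, ∀ u v : V, u ≠ v →
    (G.Adj u v ↔ (Set.Icc (lo u) (hi u) ∩ Set.Icc (lo v) (hi v)).Nonempty)

/-- `G` is the intersection graph of a family of boxes in Euclidean `k`-space. -/
def HasBoxRep {V : Type*} (G : SimpleGraph V) (k : ℕ) : Prop :=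
  ∃ lo hi : V → Fin k → ℝ, ∀ u v : V, u ≠ v →
    (G.Adj u v ↔ ∀ i, (Set.Icc (lo u i) (hi u i) ∩ Set.Icc (lo v i) (hi v i)).Nonempty)

/-- The boxicity of `G`: the minimum `k` such that `G` is the intersection graph of
a family of boxes in Euclidean `k`-space. -/
noncomputable def boxicity {V : Type*} (G : SimpleGraph V) : ℕ :=
  sInf {k | HasBoxRep G k}

/-- A set of vertices is independent if no two of its vertices are adjacent. -/
def IsIndepSet' {V : Type*} (G : SimpleGraph V) (s : Set V) : Prop :=
  s.Pairwise fun x y => ¬ G.Adj x y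

/-- A graph is chordal if it has no induced cycle of length at least `4`. -/
def IsChordal {V : Type*} (G : SimpleGraph V) : Prop :=
  ∀ n : ℕ, 4 ≤ n → ∀ f : ZMod n → V, Function.Injective f →
    ¬ (∀ i j : ZMod n, G.Adj (f i) (f j) ↔ i = j + 1 ∨ j = i + 1)

/-- `u, v, w` form an asteroidal triple: they are distinct and between any two of
them there is a path avoiding the neighborhood of the third. -/
def IsAsteroidalTriple {V : Type*} (G : SimpleGraph V) (u v w : V) : Prop :=
  u ≠ v ∧ v ≠ w ∧ u ≠ w ∧
  ∃ (p : G.Walk u v) (q : G.Walk v w) (r : G.Walk w u),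
    p.IsPath ∧ q.IsPath ∧ r.IsPath ∧
    (∀ x ∈ p.support, ¬ G.Adj w x) ∧
    (∀ x ∈ q.support, ¬ G.Adj u x) ∧
    (∀ x ∈ r.support, ¬ G.Adj v x)

/-- The circulant graph `G_{a,b}`: vertices `0, …, a-1`, with `u ~ v` iff
`u = v + c (mod a)` for some `b ≤ c ≤ a - b`. -/
def circG (a b : ℕ) : SimpleGraph (ZMod a) :=
  SimpleGraph.fromRel (fun u v => ∃ c : ℕ, b ≤ c ∧ c ≤ a - b ∧ u = v + (c : ZMod a))


private lemma key_comb (b K : ℕ) (hb : 2 ≤ b) (hK1 : 2*b - 2 ≤ K) (hK2 : b + 2 ≤ K)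
    (P : Finset ℕ) (hP : ∀ x ∈ P, x ≤ 2*b - 2)
    (hpair : ∀ x ∈ P, ∀ y ∈ P, x < y → y - x ≤ b - 1 ∨ K ≤ y - x) :
    P.card ≤ b := by
  by_cases hex : ∃ x ∈ P, ∃ y ∈ P, x < y ∧ K ≤ y - x
  · obtain ⟨x, hx, y, hy, hxy, hK⟩ := hex
    have hxb := hP x hx
    have hyb := hP y hy
    have hfacts : x = 0 ∧ y = 2*b-2 ∧ K = 2*b-2 ∧ 4 ≤ b := by omega
    have hsub : P ⊆ {0, b-1, 2*b-2} := by
      intro t ht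
      have htb := hP t ht
      simp only [Finset.mem_insert, Finset.mem_singleton]
      have h1 : t = 0 ∨ (t ≤ b-1 ∨ K ≤ t - x) := by
        rcases Nat.eq_zero_or_pos t with h | h
        · exact Or.inl h
        · exact Or.inr (by simpa [hfacts.1] using hpair x hx t ht (by omega))
      have h2 : t = y ∨ (y - t ≤ b-1 ∨ K ≤ y - t) := by
        rcases eq_or_lt_of_le (show t ≤ y by omega) with h | h
        · exact Or.inl h
        · exact Or.inr (hpair t ht y hy h)
      omega
    have hc1 : P.card ≤ ({0, b-1, 2*b-2} : Finset ℕ).card := Finset.card_le_card hsub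
    have h3 : ({0, b-1, 2*b-2} : Finset ℕ).card ≤ 3 := by
      refine le_trans (Finset.card_insert_le _ _) ?_
      have := Finset.card_insert_le (b-1) ({2*b-2} : Finset ℕ)
      simp at this ⊢
      omega
    omega
  · push_neg at hex
    rcases Finset.eq_empty_or_nonempty P with h | hne
    · simp [h]
    have hm := P.min'_mem hne
    have hsub : P ⊆ Finset.Icc (P.min' hne) (P.min' hne + (b-1)) := by
      intro t ht
      rw [Finset.mem_Icc]
      have h1 := P.min'_le t ht
      refine ⟨h1, ?_⟩
      rcases eq_or_lt_of_le h1 with h | h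
      · omega
      · have h2 := hpair _ hm t ht h
        have h3 := hex _ hm t ht h
        omega
    have := Finset.card_le_card hsub
    rw [Nat.card_Icc] at this
    omega

private lemma circG_adj' {a b : ℕ} [NeZero a] (hb : 1 ≤ b) (hab : 2*b ≤ a)
    (u v : ZMod a) :
    (circG a b).Adj u v ↔ u ≠ v ∧ b ≤ (u - v).val ∧ (u - v).val ≤ a - b := by
  have ha : 0 < a := Nat.pos_of_ne_zero (NeZero.ne a)
  rw [circG, SimpleGraph.fromRel_adj]
  constructor
  · rintro ⟨hne, h | h⟩
    · obtain ⟨c, hc1, hc2, hc3⟩ := h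
      have hc4 : c < a := by omega
      have huv : u - v = (c : ZMod a) := by rw [hc3]; ring
      rw [huv, ZMod.val_natCast_of_lt hc4]
      exact ⟨hne, hc1, hc2⟩
    · obtain ⟨c, hc1, hc2, hc3⟩ := h
      have hc4 : c < a := by omega
      have hvu : v - u = (c : ZMod a) := by rw [hc3]; ring
      have h5 : u - v = -(v - u) := by ring
      have hvu0 : (v - u).val = c := by rw [hvu, ZMod.val_natCast_of_lt hc4]
      have h6 : (u - v).val = (a - c) % a := by rw [h5, ZMod.neg_val', hvu0]
      rw [h6, Nat.mod_eq_of_lt (by omega)]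
      exact ⟨hne, by omega, by omega⟩
  · rintro ⟨hne, h1, h2⟩
    refine ⟨hne, Or.inl ⟨(u - v).val, h1, h2, ?_⟩⟩
    rw [ZMod.natCast_zmod_val]
    ring


theorem stmt14 (n b r : ℕ) (hn : 2 ≤ n) (hb : 2 ≤ b)
    (hr1 : 1 ≤ r) (hr2 : r < b) (hnr : b - r - 1 ≤ n) :
    (circG (n * b + r) b).chromaticNumber = ((n + 1 : ℕ) : ℕ∞) := by
  set a := n * b + r with ha_def
  have h2b : 2 * b ≤ n * b := Nat.mul_le_mul_right b hn
  have ha1 : 2 * b + 1 ≤ a := by omega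
  haveI : NeZero a := ⟨by omega⟩
  have hadj := circG_adj' (a := a) (b := b) (by omega) (by omega)
  -- upper bound: explicit (n+1)-coloring by blocks of b consecutive residues
  have hcol : (circG a b).Colorable (n + 1) := by
    refine ⟨SimpleGraph.Coloring.mk (fun v => ⟨v.val / b, ?_⟩) ?_⟩
    · have hv := ZMod.val_lt v
      rw [Nat.div_lt_iff_lt_mul (by omega)]
      have hmul : (n + 1) * b = n * b + b := by ring
      omega
    · intro u v huv heq
      rw [hadj] at huv
      obtain ⟨hne, hd1, hd2⟩ := huv
      set d := (u - v).val with hd_def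
      have hda : d < a := ZMod.val_lt _
      have hu : u = v + (d : ZMod a) := by rw [hd_def, ZMod.natCast_zmod_val]; ring
      have huval : u.val = (v.val + d) % a := by
        rw [hu, ZMod.val_add, ZMod.val_natCast_of_lt hda]
      have hva := ZMod.val_lt v
      have heq' : u.val / b = v.val / b := congrArg Fin.val heq
      have h1 := Nat.div_add_mod u.val b
      have h2 := Nat.div_add_mod v.val b
      have h3 : u.val % b < b := Nat.mod_lt _ (by omega)
      have h4 : v.val % b < b := Nat.mod_lt _ (by omega)
      rw [heq'] at h1
      rcases Nat.lt_or_ge (v.val + d) a with h | h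
      · rw [Nat.mod_eq_of_lt h] at huval; omega
      · have hmod : (v.val + d) % a = v.val + d - a := by
          rw [Nat.mod_eq_sub_mod h, Nat.mod_eq_of_lt (by omega)]
        rw [hmod] at huval
        omega
  -- lower bound: not n-colorable
  have hncol : ¬ (circG a b).Colorable n := by
    rintro ⟨C⟩
    obtain ⟨i, -, hi⟩ := Finset.exists_lt_card_fiber_of_mul_lt_card_of_maps_to
      (f := fun x => C x) (t := (Finset.univ : Finset (Fin n)))
      (s := (Finset.univ : Finset (ZMod a))) (n := b)
      (fun x _ => Finset.mem_univ _)
      (by simp only [Finset.card_univ, ZMod.card, Fintype.card_fin]; omega)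
    replace hi : b < (Finset.univ.filter (fun x => C x = i)).card := hi
    set T := Finset.univ.filter (fun x => C x = i) with hT_def
    have hTne : T.Nonempty := Finset.card_pos.mp (by omega)
    obtain ⟨x₀, hx₀⟩ := hTne
    set c0 : ZMod a := ((b - 1 : ℕ) : ZMod a) with hc0
    set p : ZMod a → ℕ := fun y => (y - x₀ + c0).val with hp
    have hpinj : Function.Injective p := by
      intro y z h
      have h2 : y - x₀ + c0 = z - x₀ + c0 := by
        rw [← ZMod.natCast_zmod_val (y - x₀ + c0), ← ZMod.natCast_zmod_val (z - x₀ + c0)]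
        exact congrArg _ h
      exact sub_left_injective (add_right_cancel h2)
    have hTnadj : ∀ y ∈ T, ∀ z ∈ T, y ≠ z →
        (z - y).val ≤ b - 1 ∨ a - b + 1 ≤ (z - y).val := by
      intro y hy z hz hyz
      have hCy : C y = i := (Finset.mem_filter.mp hy).2
      have hCz : C z = i := (Finset.mem_filter.mp hz).2
      have hnadj : ¬ (circG a b).Adj z y := fun hadj' => C.valid hadj' (by rw [hCz, hCy])
      rw [hadj] at hnadj
      rcases Nat.lt_or_ge ((z - y).val) b with h | h
      · left; omega
      · right
        have h2 : ¬ ((z - y).val ≤ a - b) := fun hc => hnadj ⟨fun hh => hyz hh.symm, h, hc⟩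
        omega
    have hval_c0 : c0.val = b - 1 := ZMod.val_natCast_of_lt (by omega)
    have hPbound : ∀ y ∈ T, p y ≤ 2*b - 2 := by
      intro y hy
      by_cases hyx : y = x₀
      · have hpx : p y = b - 1 := by rw [hp]; simp [hyx, hval_c0]
        omega
      · have hnd := hTnadj x₀ hx₀ y hy (Ne.symm hyx)
        have hv1 : (y - x₀).val < a := ZMod.val_lt _
        have hadd : p y = ((y - x₀).val + (b - 1)) % a := by
          rw [hp]
          show (y - x₀ + c0).val = _
          rw [ZMod.val_add, hval_c0]
        rcases hnd with h | h
        · rw [Nat.mod_eq_of_lt (by omega)] at hadd; omega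
        · have hmod : ((y - x₀).val + (b-1)) % a = (y - x₀).val + (b-1) - a := by
            rw [Nat.mod_eq_sub_mod (by omega), Nat.mod_eq_of_lt (by omega)]
          rw [hmod] at hadd; omega
    set P := T.image p with hP_def
    have hPcard : P.card = T.card := Finset.card_image_of_injective T hpinj
    have hPa : ∀ x ∈ P, x ≤ 2*b - 2 := by
      intro x hx
      obtain ⟨y, hy, rfl⟩ := Finset.mem_image.mp hx
      exact hPbound y hy
    have hPpair : ∀ x ∈ P, ∀ y ∈ P, x < y → y - x ≤ b - 1 ∨ (a - b + 1) ≤ y - x := by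
      intro x hx y hy hxy
      obtain ⟨u, hu, rfl⟩ := Finset.mem_image.mp hx
      obtain ⟨v, hv, rfl⟩ := Finset.mem_image.mp hy
      have hne : u ≠ v := fun h => by subst h; omega
      have hdiff : (v - u).val = p v - p u := by
        have h1 : v - u = ((p v - p u : ℕ) : ZMod a) := by
          rw [Nat.cast_sub (le_of_lt hxy)]
          show v - u = ((v - x₀ + c0).val : ZMod a) - ((u - x₀ + c0).val : ZMod a)
          rw [ZMod.natCast_zmod_val, ZMod.natCast_zmod_val]
          ring
        rw [h1, ZMod.val_natCast_of_lt (by have := hPa _ hy; omega)]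
      have hres := hTnadj u hu v hv hne
      rw [hdiff] at hres
      exact hres
    have hkey := key_comb b (a - b + 1) hb ?_ (by omega) P hPa hPpair
    · omega
    · rcases Nat.lt_or_ge n 3 with h3 | h3
      · have hn2 : n = 2 := by omega
        subst hn2
        omega
      · have h3b := Nat.mul_le_mul_right b h3
        omega
  have h2 : (n : ℕ∞) < (circG a b).chromaticNumber :=
    lt_of_not_ge (fun h => hncol (chromaticNumber_le_iff_colorable.mp h))
  refine le_antisymm hcol.chromaticNumber_le ?_
  have h3 := (ENat.add_one_le_iff (by simp : (n : ℕ∞) ≠ ⊤)).mpr h2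
  exact_mod_cast h3
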